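/- arXiv:2511.19164 — 4 statements merged into one kernel-verified Lean document; each statement's English description precedes it below -/
import Mathlib

section
/- Let T be an ℝ-subalgebra of the n×n real matrices containing the identity, let W ⊆ ℝⁿ be a T-submodule that is irreducible (nonzero with no proper nonzero T-submodules), and suppose there is an idempotent E ∈ T such that EW has ℝ-dimension 1 and every element of ETE acts on W as a symmetric matrix with all elements of ETE commuting on W. Then the complexified module W ⊗ ℂ is an irreducible module over the ℂ-algebra T ⊗ ℂ (identified with the ℂ-span of T inside n×n complex matrices). -/
open Matrix

/-- The complexification `W + iW ⊆ ℂⁿ` of a real subspace `W ⊆ ℝⁿ`. -/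
noncomputable def complexifySub {n : ℕ} (W : Submodule ℝ (Fin n → ℝ)) :
    Submodule ℂ (Fin n → ℂ) :=
  Submodule.span ℂ ((fun v : Fin n → ℝ => fun i => ((v i : ℝ) : ℂ)) '' (W : Set (Fin n → ℝ)))

/-- The ℂ-span `T + iT ⊆ Mat_n(ℂ)` of a real matrix algebra `T ⊆ Mat_n(ℝ)`. -/
noncomputable def complexAlg {n : ℕ} (T : Subalgebra ℝ (Matrix (Fin n) (Fin n) ℝ)) :
    Subalgebra ℂ (Matrix (Fin n) (Fin n) ℂ) :=
  Algebra.adjoin ℂ ((fun B : Matrix (Fin n) (Fin n) ℝ => B.map (algebraMap ℝ ℂ)) ''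
    (T : Set (Matrix (Fin n) (Fin n) ℝ)))

/-- `W` is invariant under all matrices in `T`. -/
def Invar {n : ℕ} {F : Type*} [Field F] (T : Set (Matrix (Fin n) (Fin n) F))
    (W : Submodule F (Fin n → F)) : Prop :=
  ∀ B ∈ T, ∀ w ∈ W, B.mulVec w ∈ W

/-- `W` is a nonzero `T`-invariant subspace with no proper nonzero `T`-invariant
subspaces, i.e. an irreducible `T`-module. -/
def IsIrred {n : ℕ} {F : Type*} [Field F] (T : Set (Matrix (Fin n) (Fin n) F))
    (W : Submodule F (Fin n → F)) : Prop :=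
  W ≠ ⊥ ∧ Invar T W ∧
    ∀ U : Submodule F (Fin n → F), U ≤ W → Invar T U → U = ⊥ ∨ U = W

namespace Stmt2Aux

variable {n : ℕ}

def reV (v : Fin n → ℂ) : Fin n → ℝ := fun i => (v i).re
def imV (v : Fin n → ℂ) : Fin n → ℝ := fun i => (v i).im
def cxV (x : Fin n → ℝ) : Fin n → ℂ := fun i => (x i : ℂ)

lemma reV_cx (x : Fin n → ℝ) : reV (cxV x) = x := by funext i; simp [reV, cxV]
lemma imV_cx (x : Fin n → ℝ) : imV (cxV x) = 0 := by funext i; simp [imV, cxV]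
lemma reV_add (v w : Fin n → ℂ) : reV (v + w) = reV v + reV w := by
  funext i; simp [reV]
lemma imV_add (v w : Fin n → ℂ) : imV (v + w) = imV v + imV w := by
  funext i; simp [imV]
lemma reV_smul (z : ℂ) (v : Fin n → ℂ) : reV (z • v) = z.re • reV v - z.im • imV v := by
  funext i; simp [reV, imV, Complex.mul_re, mul_comm]
lemma imV_smul (z : ℂ) (v : Fin n → ℂ) : imV (z • v) = z.re • imV v + z.im • reV v := by
  funext i
  simp only [reV, imV, Pi.smul_apply, Pi.add_apply, Complex.smul_re, Complex.smul_im,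
    Complex.mul_im, smul_eq_mul]
lemma reV_zero : reV (0 : Fin n → ℂ) = 0 := by funext i; simp [reV]
lemma imV_zero : imV (0 : Fin n → ℂ) = 0 := by funext i; simp [imV]
lemma v_eq (v : Fin n → ℂ) : v = cxV (reV v) + Complex.I • cxV (imV v) := by
  funext i
  show v i = ((v i).re : ℂ) + Complex.I * ((v i).im : ℂ)
  rw [mul_comm]
  exact (Complex.re_add_im (v i)).symm

lemma cx_eq_zero {x : Fin n → ℝ} (h : cxV x = 0) : x = 0 := by
  funext i
  have := congrFun h i
  simpa [cxV] using this

lemma eq_zero_of_re_im {v : Fin n → ℂ} (h1 : reV v = 0) (h2 : imV v = 0) : v = 0 := by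
  funext i
  have h1 := congrFun h1 i
  have h2 := congrFun h2 i
  simp only [reV, imV, Pi.zero_apply] at h1 h2
  exact Complex.ext h1 h2

lemma reV_mulVec (B : Matrix (Fin n) (Fin n) ℝ) (v : Fin n → ℂ) :
    reV ((B.map (algebraMap ℝ ℂ)).mulVec v) = B.mulVec (reV v) := by
  funext i
  simp [reV, Matrix.mulVec, dotProduct, Complex.re_sum, Complex.mul_re]

lemma imV_mulVec (B : Matrix (Fin n) (Fin n) ℝ) (v : Fin n → ℂ) :
    imV ((B.map (algebraMap ℝ ℂ)).mulVec v) = B.mulVec (imV v) := by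
  funext i
  simp [imV, Matrix.mulVec, dotProduct, Complex.im_sum, Complex.mul_im]

lemma mem_complexify (W : Submodule ℝ (Fin n → ℝ)) (v : Fin n → ℂ) :
    v ∈ complexifySub W ↔ reV v ∈ W ∧ imV v ∈ W := by
  constructor
  · intro hv
    induction hv using Submodule.span_induction with
    | mem x hx =>
      obtain ⟨y, hy, rfl⟩ := hx
      refine ⟨?_, ?_⟩
      · show reV (cxV y) ∈ W
        rw [reV_cx]; exact hy
      · show imV (cxV y) ∈ W
        rw [imV_cx]; exact W.zero_mem
    | zero =>
      exact ⟨by rw [reV_zero]; exact W.zero_mem, by rw [imV_zero]; exact W.zero_mem⟩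
    | add x y _ _ hx hy =>
      exact ⟨by rw [reV_add]; exact W.add_mem hx.1 hy.1,
        by rw [imV_add]; exact W.add_mem hx.2 hy.2⟩
    | smul z x _ hx =>
      exact ⟨by rw [reV_smul]; exact W.sub_mem (W.smul_mem _ hx.1) (W.smul_mem _ hx.2),
        by rw [imV_smul]; exact W.add_mem (W.smul_mem _ hx.2) (W.smul_mem _ hx.1)⟩
  · rintro ⟨h1, h2⟩
    have hmem : ∀ x ∈ W, cxV x ∈ complexifySub W := fun x hx =>
      Submodule.subset_span ⟨x, hx, rfl⟩
    rw [v_eq v]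
    exact (complexifySub W).add_mem (hmem _ h1)
      ((complexifySub W).smul_mem _ (hmem _ h2))

lemma cx_mem {W : Submodule ℝ (Fin n → ℝ)} {x : Fin n → ℝ} (hx : x ∈ W) :
    cxV x ∈ complexifySub W :=
  Submodule.subset_span ⟨x, hx, rfl⟩

lemma invar_complexify {T : Subalgebra ℝ (Matrix (Fin n) (Fin n) ℝ)}
    {W : Submodule ℝ (Fin n → ℝ)}
    (hInv : ∀ B ∈ T, ∀ w ∈ W, B.mulVec w ∈ W) :
    ∀ M ∈ complexAlg T, ∀ v ∈ complexifySub W, M.mulVec v ∈ complexifySub W := by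
  intro M hM
  induction hM using Algebra.adjoin_induction with
  | mem x hx =>
    obtain ⟨B, hB, rfl⟩ := hx
    intro v hv
    rw [mem_complexify] at hv ⊢
    rw [reV_mulVec, imV_mulVec]
    exact ⟨hInv B hB _ hv.1, hInv B hB _ hv.2⟩
  | algebraMap r =>
    intro v hv
    have : (algebraMap ℂ (Matrix (Fin n) (Fin n) ℂ) r).mulVec v = r • v := by
      rw [Algebra.algebraMap_eq_smul_one]
      rw [Matrix.smul_mulVec, Matrix.one_mulVec]
    rw [this]
    exact (complexifySub W).smul_mem _ hv
  | add x y hx hy ihx ihy =>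
    intro v hv
    rw [Matrix.add_mulVec]
    exact (complexifySub W).add_mem (ihx v hv) (ihy v hv)
  | mul x y hx hy ihx ihy =>
    intro v hv
    rw [← Matrix.mulVec_mulVec]
    exact ihx _ (ihy v hv)

lemma mem_complexAlg {T : Subalgebra ℝ (Matrix (Fin n) (Fin n) ℝ)}
    {B : Matrix (Fin n) (Fin n) ℝ} (hB : B ∈ T) :
    B.map (algebraMap ℝ ℂ) ∈ complexAlg T :=
  Algebra.subset_adjoin ⟨B, hB, rfl⟩

lemma reV_sub (v w : Fin n → ℂ) : reV (v - w) = reV v - reV w := by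
  funext i; simp [reV]
lemma imV_sub (v w : Fin n → ℂ) : imV (v - w) = imV v - imV w := by
  funext i; simp [imV]
lemma cxV_zero : cxV (0 : Fin n → ℝ) = 0 := by funext i; simp [cxV]
lemma cxV_add (x y : Fin n → ℝ) : cxV (x + y) = cxV x + cxV y := by
  funext i; simp [cxV]
lemma cxV_smul (r : ℝ) (x : Fin n → ℝ) : cxV (r • x) = (r : ℂ) • cxV x := by
  funext i; simp [cxV]
lemma reV_real_smul (r : ℝ) (v : Fin n → ℂ) : reV ((r : ℂ) • v) = r • reV v := by
  rw [reV_smul]; simp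
lemma eq_cx_of_im_zero {v : Fin n → ℂ} (h : imV v = 0) : v = cxV (reV v) := by
  conv_lhs => rw [v_eq v]
  rw [h, cxV_zero, smul_zero, add_zero]

end Stmt2Aux

open Stmt2Aux

/-- if `T ⊆ Mat_n(ℝ)` is a unital transpose-closed subalgebra, `W` an
irreducible `T`-module, and `E ∈ T` an idempotent with `dim EW = 1` such that the
elements of `ETE` are symmetric and commute on `W`, then the complexification `W^ℂ`
is an irreducible module over `T^ℂ`. -/
theorem stmt_2 {n : ℕ} (T : Subalgebra ℝ (Matrix (Fin n) (Fin n) ℝ))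
    (hTt : ∀ B ∈ T, Bᵀ ∈ T)
    (W : Submodule ℝ (Fin n → ℝ)) (hW : IsIrred (T : Set (Matrix (Fin n) (Fin n) ℝ)) W)
    (E : Matrix (Fin n) (Fin n) ℝ) (hE : E ∈ T) (hEi : E * E = E)
    (hdim : Module.finrank ℝ (Submodule.map E.mulVecLin W) = 1)
    (hsym : ∀ B ∈ T, (E * B * E)ᵀ = E * B * E)
    (hcomm : ∀ B ∈ T, ∀ C ∈ T, ∀ w ∈ W,
      (E * B * E).mulVec ((E * C * E).mulVec w) = (E * C * E).mulVec ((E * B * E).mulVec w)) :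
    IsIrred (complexAlg T : Set (Matrix (Fin n) (Fin n) ℂ)) (complexifySub W) := by
  classical
  obtain ⟨hWne, hWinv, hWmax⟩ := hW
  refine ⟨?_, fun M hM v hv => invar_complexify hWinv M hM v hv, ?_⟩
  · obtain ⟨w, hwW, hw0⟩ := Submodule.ne_bot_iff W |>.mp hWne
    intro h
    apply hw0
    have hmem : cxV w ∈ complexifySub W := cx_mem hwW
    rw [h, Submodule.mem_bot] at hmem
    exact cx_eq_zero hmem
  intro U hUle hUinv
  by_cases hUbot : U = ⊥
  · exact Or.inl hUbot
  right
  have hUW : ∀ v ∈ U, reV v ∈ W ∧ imV v ∈ W := fun v hv =>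
    (mem_complexify W v).mp (hUle hv)
  -- real points of U
  let V0 : Submodule ℝ (Fin n → ℝ) :=
    { carrier := {x | cxV x ∈ U}
      add_mem' := fun {x y} hx hy => by
        show cxV (x + y) ∈ U
        rw [cxV_add]; exact U.add_mem hx hy
      zero_mem' := by show cxV 0 ∈ U; rw [cxV_zero]; exact U.zero_mem
      smul_mem' := fun r x hx => by
        show cxV (r • x) ∈ U
        rw [cxV_smul]; exact U.smul_mem _ hx }
  have hV0le : V0 ≤ W := by
    intro x hx
    have := (hUW _ hx).1
    rwa [reV_cx] at this
  have hV0inv : Invar (T : Set (Matrix (Fin n) (Fin n) ℝ)) V0 := by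
    intro B hB x hx
    show cxV (B.mulVec x) ∈ U
    have h1 : (B.map (algebraMap ℝ ℂ)).mulVec (cxV x) ∈ U :=
      hUinv _ (mem_complexAlg hB) _ hx
    have h2 : (B.map (algebraMap ℝ ℂ)).mulVec (cxV x) = cxV (B.mulVec x) := by
      have him : imV ((B.map (algebraMap ℝ ℂ)).mulVec (cxV x)) = 0 := by
        rw [imV_mulVec, imV_cx, Matrix.mulVec_zero]
      rw [eq_cx_of_im_zero him, reV_mulVec, reV_cx]
    rwa [h2] at h1
  rcases hWmax V0 hV0le hV0inv with hV0 | hV0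
  · -- V0 = ⊥ : contradiction
    exfalso
    -- injectivity of reV on U
    have hinj : ∀ v ∈ U, ∀ v' ∈ U, reV v = reV v' → v = v' := by
      intro v hv v' hv' hre
      have hd : v - v' ∈ U := U.sub_mem hv hv'
      have hdre : reV (v - v') = 0 := by rw [reV_sub, hre, sub_self]
      have hu : (-Complex.I) • (v - v') ∈ U := U.smul_mem _ hd
      have hure : reV ((-Complex.I) • (v - v')) = imV (v - v') := by
        rw [reV_smul, hdre]; simp
      have huim : imV ((-Complex.I) • (v - v')) = 0 := by
        rw [imV_smul, hdre]; simp
      have heq : (-Complex.I) • (v - v') = cxV (imV (v - v')) := by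
        rw [eq_cx_of_im_zero huim, hure]
      have : imV (v - v') ∈ V0 := by
        show cxV (imV (v - v')) ∈ U
        rw [← heq]; exact hu
      rw [hV0, Submodule.mem_bot] at this
      have hveq : v - v' = 0 := eq_zero_of_re_im hdre this
      exact sub_eq_zero.mp hveq
    -- ReU = W
    let ReU : Submodule ℝ (Fin n → ℝ) :=
      { carrier := {x | ∃ v ∈ U, reV v = x}
        add_mem' := by
          rintro x y ⟨v, hv, hvx⟩ ⟨w, hw, hwy⟩
          exact ⟨v + w, U.add_mem hv hw, by rw [reV_add, hvx, hwy]⟩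
        zero_mem' := ⟨0, U.zero_mem, reV_zero⟩
        smul_mem' := by
          rintro r x ⟨v, hv, hvx⟩
          exact ⟨(r : ℂ) • v, U.smul_mem _ hv, by rw [reV_real_smul, hvx]⟩ }
    have hReUle : ReU ≤ W := by
      rintro x ⟨v, hv, rfl⟩
      exact (hUW v hv).1
    have hReUinv : Invar (T : Set (Matrix (Fin n) (Fin n) ℝ)) ReU := by
      rintro B hB x ⟨v, hv, rfl⟩
      exact ⟨(B.map (algebraMap ℝ ℂ)).mulVec v, hUinv _ (mem_complexAlg hB) _ hv,
        reV_mulVec B v⟩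
    have hReUne : ReU ≠ ⊥ := by
      intro h
      obtain ⟨v0, hv0U, hv0ne⟩ := Submodule.ne_bot_iff U |>.mp hUbot
      apply hv0ne
      have h1 : reV v0 = 0 := by
        have : reV v0 ∈ ReU := ⟨v0, hv0U, rfl⟩
        rwa [h, Submodule.mem_bot] at this
      have h2 : reV (Complex.I • v0) = 0 := by
        have : reV (Complex.I • v0) ∈ ReU := ⟨_, U.smul_mem _ hv0U, rfl⟩
        rwa [h, Submodule.mem_bot] at this
      have h3 : imV v0 = 0 := by
        rw [reV_smul] at h2
        simp at h2
        exact h2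
      exact eq_zero_of_re_im h1 h3
    have hReU : ReU = W := (hWmax ReU hReUle hReUinv).resolve_left hReUne
    -- EW
    set EW := Submodule.map E.mulVecLin W with hEWdef
    have hEWle : EW ≤ W := by
      rintro x ⟨u, hu, rfl⟩
      rw [Matrix.mulVecLin_apply]
      exact hWinv E hE u hu
    have hEWne : EW ≠ ⊥ := by
      intro h
      rw [h, finrank_bot] at hdim
      exact absurd hdim (by norm_num)
    obtain ⟨w0, hw0EW, hw0ne⟩ := Submodule.ne_bot_iff EW |>.mp hEWne
    have hspan : Submodule.span ℝ {w0} = EW := by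
      apply Submodule.eq_of_le_of_finrank_le
      · rw [Submodule.span_singleton_le_iff_mem]; exact hw0EW
      · rw [hdim, finrank_span_singleton hw0ne]
    have hEw0 : E.mulVec w0 = w0 := by
      obtain ⟨u, hu, rfl⟩ := hw0EW
      rw [Matrix.mulVecLin_apply, Matrix.mulVec_mulVec, hEi]
    -- get v ∈ U with reV v = w0
    have hw0W : w0 ∈ W := hEWle hw0EW
    have : w0 ∈ ReU := by rw [hReU]; exact hw0W
    obtain ⟨v, hvU, hvre⟩ := this
    set v' := (E.map (algebraMap ℝ ℂ)).mulVec v with hv'def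
    have hv'U : v' ∈ U := hUinv _ (mem_complexAlg hE) _ hvU
    have hv're : reV v' = w0 := by rw [hv'def, reV_mulVec, hvre, hEw0]
    have hv'imEW : imV v' ∈ EW := by
      rw [hv'def, imV_mulVec]
      exact ⟨imV v, (hUW v hvU).2, Matrix.mulVecLin_apply E (imV v) |>.symm ▸ rfl⟩
    obtain ⟨c, hc⟩ : ∃ c : ℝ, c • w0 = imV v' := by
      have : imV v' ∈ Submodule.span ℝ {w0} := hspan ▸ hv'imEW
      exact Submodule.mem_span_singleton.mp this
    -- compare I • v' and (-c) • v'
    have ha : Complex.I • v' ∈ U := U.smul_mem _ hv'U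
    have hb : ((-c : ℝ) : ℂ) • v' ∈ U := U.smul_mem _ hv'U
    have hre : reV (Complex.I • v') = reV (((-c : ℝ) : ℂ) • v') := by
      rw [reV_smul, reV_real_smul, hv're, ← hc]
      simp
    have heq := hinj _ ha _ hb hre
    have hz : (Complex.I - ((-c : ℝ) : ℂ)) • v' = 0 := by
      rw [sub_smul, heq, sub_self]
    rcases smul_eq_zero.mp hz with hz0 | hv'0
    · have : (Complex.I - ((-c : ℝ) : ℂ)).im = 0 := by rw [hz0]; rfl
      simp at this
    · apply hw0ne
      rw [← hv're, hv'0, reV_zero]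
  · -- V0 = W : U = complexifySub W
    apply le_antisymm hUle
    intro v hv
    obtain ⟨h1, h2⟩ := (mem_complexify W v).mp hv
    have hr : cxV (reV v) ∈ U := by rw [← hV0] at h1; exact h1
    have hi : cxV (imV v) ∈ U := by rw [← hV0] at h2; exact h2
    rw [v_eq v]
    exact U.add_mem hr (U.smul_mem _ hi)
end

section
/- Let T be a unital ℝ-algebra, W an irreducible T-module of finite dimension over ℝ, and suppose there exists an idempotent e ∈ T such that dim_ℝ(eW) = 1. Then the endomorphism algebra End_T(W) is isomorphic to ℝ as an ℝ-algebra. -/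
/-- Let `T` be a unital ℝ-algebra, `W` an irreducible `T`-module that is
finite-dimensional over ℝ, and `e ∈ T` an idempotent with `dim_ℝ(eW) = 1`. Then
`End_T(W) ≅ ℝ` as ℝ-algebras. -/
theorem stmt_4 {T W : Type*} [Ring T] [Algebra ℝ T]
    [AddCommGroup W] [Module T W] [Module ℝ W] [IsScalarTower ℝ T W]
    [SMulCommClass T ℝ W] [SMulCommClass ℝ T W]
    [FiniteDimensional ℝ W] [IsSimpleModule T W]
    (e : T) (he : e * e = e)
    (hdim : Module.finrank ℝ (LinearMap.range
      ({ toFun := fun w : W => e • w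
         map_add' := fun x y => smul_add e x y
         map_smul' := fun r x => smul_comm e r x } : W →ₗ[ℝ] W)) = 1) :
    Nonempty (Module.End T W ≃ₐ[ℝ] ℝ) := by
  set E : W →ₗ[ℝ] W :=
    ({ toFun := fun w : W => e • w
       map_add' := fun x y => smul_add e x y
       map_smul' := fun r x => smul_comm e r x } : W →ₗ[ℝ] W) with hE
  set V : Submodule ℝ W := LinearMap.range E with hV
  obtain ⟨v, hv0, hvspan⟩ := (finrank_eq_one_iff' (K := ℝ) (V := V)).mp hdim
  have hbij : Function.Bijective (Algebra.ofId ℝ (Module.End T W)) := by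
    constructor
    · intro r s hrs
      have : Nontrivial W := IsSimpleModule.nontrivial T W
      obtain ⟨w, hw⟩ := exists_ne (0 : W)
      have : (r : ℝ) • w = s • w := by
        have := congrArg (fun f : Module.End T W => f w) hrs
        simpa [Algebra.ofId_apply, Module.algebraMap_end_apply] using this
      have : (r - s) • w = 0 := by rw [sub_smul, this, sub_self]
      rcases smul_eq_zero.mp this with h | h
      · linarith [sub_eq_zero.mp (by linarith : r - s = 0)]
      · exact absurd h hw
    · intro φ
      -- φ preserves V
      obtain ⟨w, hw⟩ := v.2
      have hφv : φ (v : W) ∈ V := by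
        refine ⟨φ w, ?_⟩
        have : E (φ w) = e • φ w := rfl
        rw [this, ← map_smul φ e w]
        have : E w = e • w := rfl
        rw [← this, hw]
      obtain ⟨c, hc⟩ := hvspan ⟨φ (v : W), hφv⟩
      have hc' : c • (v : W) = φ (v : W) := congrArg Subtype.val hc
      refine ⟨c, ?_⟩
      -- show algebraMap c = φ by simplicity
      have hker : (v : W) ∈ LinearMap.ker (φ - Algebra.ofId ℝ (Module.End T W) c) := by
        simp only [LinearMap.mem_ker, LinearMap.sub_apply, Algebra.ofId_apply,
          Module.algebraMap_end_apply]
        rw [← hc', sub_self]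
      have hne : LinearMap.ker (φ - Algebra.ofId ℝ (Module.End T W) c) ≠ ⊥ := by
        intro h
        rw [h, Submodule.mem_bot] at hker
        exact hv0 (Subtype.ext hker)
      have htop : LinearMap.ker (φ - Algebra.ofId ℝ (Module.End T W) c) = ⊤ :=
        (eq_bot_or_eq_top _).resolve_left hne
      have : φ - Algebra.ofId ℝ (Module.End T W) c = 0 := by
        ext x
        have := htop ▸ Submodule.mem_top (x := x)
        simpa [LinearMap.mem_ker] using this
      ext x
      have := congrArg (fun f : Module.End T W => f x) this
      simp only [LinearMap.sub_apply, LinearMap.zero_apply, sub_eq_zero] at this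
      exact this.symm
  exact ⟨(AlgEquiv.ofBijective (Algebra.ofId ℝ (Module.End T W)) hbij).symm⟩
end

section
/- Let F = ℝ or ℂ and let T ⊆ Mat_n(F) be a unital subalgebra closed under conjugate-transpose. Let E ∈ T be a self-adjoint idempotent, and suppose Fⁿ = ⊕_j W_j is an orthogonal direct sum of irreducible T-submodules such that dim(EW_j) ≤ 1 for every j, with exactly ℓ nonzero summands EW_j up to T-module isomorphism class and EW_j ≠ 0 for N of the W_j. Then the algebra ETE (acting faithfully on EFⁿ) is isomorphic as an F-algebra to F^ℓ (a direct sum of ℓ copies of F). -/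
open Matrix

/-- `W` and `W'` are isomorphic as `T`-modules. -/
def TIso {n : ℕ} {F : Type*} [Field F] (T : Set (Matrix (Fin n) (Fin n) F))
    (W W' : Submodule F (Fin n → F)) : Prop :=
  ∃ σ : (Fin n → F) →ₗ[F] (Fin n → F),
    Set.BijOn σ (W : Set (Fin n → F)) (W' : Set (Fin n → F)) ∧
    ∀ B ∈ T, ∀ v ∈ W, σ (B.mulVec v) = B.mulVec (σ v)

/-- The algebra `ETE = {EBE : B ∈ T}` (with multiplicative identity `E`), as a
non-unital subalgebra of `Mat_n(F)`. -/
def eTe {n : ℕ} {F : Type*} [Field F] (T : Subalgebra F (Matrix (Fin n) (Fin n) F))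
    (E : Matrix (Fin n) (Fin n) F) (hE : E ∈ T) :
    NonUnitalSubalgebra F (Matrix (Fin n) (Fin n) F) where
  carrier := {x | ∃ B ∈ T, x = E * B * E}
  add_mem' := by
    rintro a b ⟨B, hB, rfl⟩ ⟨C, hC, rfl⟩
    exact ⟨B + C, add_mem hB hC, by noncomm_ring⟩
  zero_mem' := ⟨0, zero_mem _, by simp⟩
  mul_mem' := by
    rintro a b ⟨B, hB, rfl⟩ ⟨C, hC, rfl⟩
    exact ⟨B * E * E * C, mul_mem (mul_mem (mul_mem hB hE) hE) hC, by noncomm_ring⟩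
  smul_mem' := by
    rintro c a ⟨B, hB, rfl⟩
    exact ⟨c • B, SMulMemClass.smul_mem c hB, by
      rw [Matrix.mul_smul, Matrix.smul_mul]⟩

section auxlemmas

variable {n : ℕ} {F : Type*}

lemma aux_span_eq [Field F] (p : Submodule F (Fin n → F))
    (hp : Module.finrank F p ≤ 1) {v : Fin n → F} (hv : v ∈ p) (hv0 : v ≠ 0) :
    p = Submodule.span F {v} := by
  refine (Submodule.eq_of_le_of_finrank_le
    ((Submodule.span_singleton_le_iff_mem v p).mpr hv) ?_).symm
  rw [finrank_span_singleton hv0]; exact hp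

lemma aux_adjoint [RCLike F] (A : Matrix (Fin n) (Fin n) F) (u w : Fin n → F) :
    star u ⬝ᵥ (A *ᵥ w) = star (Aᴴ *ᵥ u) ⬝ᵥ w := by
  rw [star_mulVec, conjTranspose_conjTranspose, dotProduct_mulVec]

lemma aux_dot_self_zero [RCLike F] {u : Fin n → F} (h : star u ⬝ᵥ u = 0) : u = 0 := by
  have h2 : ∑ i, (starRingEnd F) (u i) * u i = 0 := by
    simpa [dotProduct] using h
  have h3 : ∀ i, (starRingEnd F) (u i) * u i = ((‖u i‖ : F)) ^ 2 := fun i =>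
    RCLike.conj_mul (u i)
  rw [Finset.sum_congr rfl (fun i _ => h3 i)] at h2
  have h4 : ∑ i, (‖u i‖ ^ 2 : ℝ) = 0 := by
    have h2b : ((∑ i, ‖u i‖ ^ 2 : ℝ) : F) = 0 := by push_cast; exact h2
    exact_mod_cast h2b
  have h5 := (Finset.sum_eq_zero_iff_of_nonneg (fun i _ => sq_nonneg (‖u i‖))).mp h4
  funext i
  have := h5 i (Finset.mem_univ i)
  have : ‖u i‖ = 0 := by
    have := sq_eq_zero_iff.mp this
    exact this
  simpa using this

end auxlemmas

set_option maxHeartbeats 1600000 in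
/-- Let `F = ℝ` or `ℂ`, `T ⊆ Mat_n(F)` a unital subalgebra closed under
conjugate-transpose, `E ∈ T` a self-adjoint idempotent, and suppose
`Fⁿ = ⊕_j W_j` is an orthogonal direct sum of irreducible `T`-modules with
`dim (E W_j) ≤ 1` for all `j` and exactly `ℓ` isomorphism classes among the `W_j`
with `E W_j ≠ 0`. Then `ETE ≅ F^ℓ` as `F`-algebras. -/
theorem stmt_14 {n : ℕ} {F : Type*} [RCLike F]
    (T : Subalgebra F (Matrix (Fin n) (Fin n) F))
    (hTc : ∀ B ∈ T, Bᴴ ∈ T)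
    (E : Matrix (Fin n) (Fin n) F) (hE : E ∈ T) (hEi : E * E = E) (hEs : Eᴴ = E)
    (m : ℕ) (Ws : Fin m → Submodule F (Fin n → F))
    (hirr : ∀ j, IsIrred (T : Set (Matrix (Fin n) (Fin n) F)) (Ws j))
    (horth : ∀ i j, i ≠ j → ∀ u ∈ Ws i, ∀ v ∈ Ws j, ∑ k, (starRingEnd F) (u k) * v k = 0)
    (hsup : (⨆ j, Ws j) = ⊤)
    (hind : ∀ i, Disjoint (Ws i) (⨆ j, ⨆ _ : j ≠ i, Ws j))
    (hdim : ∀ j, Module.finrank F (Submodule.map E.mulVecLin (Ws j)) ≤ 1)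
    (ℓ : ℕ) (reps : Fin ℓ → Fin m)
    (hrep0 : ∀ k, Submodule.map E.mulVecLin (Ws (reps k)) ≠ ⊥)
    (hrepdist : ∀ k k', k ≠ k' →
      ¬ TIso (T : Set (Matrix (Fin n) (Fin n) F)) (Ws (reps k)) (Ws (reps k')))
    (hrepfull : ∀ j, Submodule.map E.mulVecLin (Ws j) ≠ ⊥ →
      ∃ k, TIso (T : Set (Matrix (Fin n) (Fin n) F)) (Ws j) (Ws (reps k))) :
    ∃ φ : (eTe T E hE) ≃+* (Fin ℓ → F), ∀ (c : F) (x : eTe T E hE), φ (c • x) = c • φ x := by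
  classical
  let EW : Fin m → Submodule F (Fin n → F) := fun j => Submodule.map E.mulVecLin (Ws j)
  have hWinv : ∀ j, Invar (T : Set (Matrix (Fin n) (Fin n) F)) (Ws j) := fun j => (hirr j).2.1
  -- choose a nonzero vector in each nonzero EW j
  have hvex : ∀ j, ∃ v : Fin n → F, (EW j ≠ ⊥ → v ∈ EW j ∧ v ≠ 0) := by
    intro j
    by_cases h : EW j = ⊥
    · exact ⟨0, fun h' => absurd h h'⟩
    · obtain ⟨v, hvm, hv0⟩ := Submodule.exists_mem_ne_zero_of_ne_bot h
      exact ⟨v, fun _ => ⟨hvm, hv0⟩⟩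
  choose v hv using hvex
  have hi0ex : ∀ j, EW j ≠ ⊥ → ∃ i, v j i ≠ 0 := by
    intro j hj
    exact Function.ne_iff.mp (hv j hj).2
  choose i0 hi0 using hi0ex
  let lam : Fin m → Matrix (Fin n) (Fin n) F → F := fun j x =>
    if h : EW j ≠ ⊥ then (x *ᵥ v j) (i0 j h) / v j (i0 j h) else 0
  -- basic facts
  have hlam_eq : ∀ j (hj : EW j ≠ ⊥) (x : Matrix (Fin n) (Fin n) F) (c : F),
      x *ᵥ v j = c • v j → lam j x = c := by
    intro j hj x c h
    show (if h : EW j ≠ ⊥ then (x *ᵥ v j) (i0 j h) / v j (i0 j h) else 0) = c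
    rw [dif_pos hj, h]
    show c * v j (i0 j hj) / v j (i0 j hj) = c
    exact mul_div_cancel_right₀ c (hi0 j hj)
  have hspan : ∀ j (_ : EW j ≠ ⊥), EW j = Submodule.span F {v j} := fun j hj =>
    aux_span_eq _ (hdim j) (hv j hj).1 (hv j hj).2
  have hscal : ∀ j (hj : EW j ≠ ⊥) (u : Fin n → F), u ∈ EW j → ∃ c : F, u = c • v j := by
    intro j hj u hu
    rw [hspan j hj] at hu
    obtain ⟨c, hc⟩ := Submodule.mem_span_singleton.mp hu
    exact ⟨c, hc.symm⟩
  have hEfix : ∀ j, ∀ u ∈ EW j, E *ᵥ u = u := by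
    rintro j u ⟨w, hw, rfl⟩
    simp only [mulVecLin_apply, mulVec_mulVec, hEi]
  have hEWsub : ∀ j, ∀ u ∈ EW j, u ∈ Ws j := by
    rintro j u ⟨w, hw, rfl⟩
    exact hWinv j E hE w hw
  have hact : ∀ (x : Matrix (Fin n) (Fin n) F), x ∈ eTe T E hE → ∀ j, ∀ u ∈ EW j, x *ᵥ u ∈ EW j := by
    rintro x ⟨B, hB, rfl⟩ j u ⟨w, hw, rfl⟩
    have h1 : E *ᵥ w ∈ Ws j := hWinv j E hE w hw
    have h2 : B *ᵥ (E *ᵥ w) ∈ Ws j := hWinv j B hB _ h1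
    refine ⟨B *ᵥ (E *ᵥ w), h2, ?_⟩
    simp only [mulVecLin_apply, mulVec_mulVec, mul_assoc, hEi]
  have hE_mem : E ∈ eTe T E hE := ⟨1, one_mem T, by rw [mul_one, hEi]⟩
  have hEv : ∀ j (hj : EW j ≠ ⊥), E *ᵥ v j = v j := fun j hj => hEfix j _ (hv j hj).1
  have hlam_spec : ∀ j (hj : EW j ≠ ⊥) (x : Matrix (Fin n) (Fin n) F), x ∈ eTe T E hE →
      x *ᵥ v j = lam j x • v j := by
    intro j hj x hx
    obtain ⟨c, hc⟩ := hscal j hj _ (hact x hx j (v j) (hv j hj).1)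
    rw [hc, hlam_eq j hj x c hc]
  have hlam_E : ∀ j (hj : EW j ≠ ⊥), lam j E = 1 := by
    intro j hj
    exact hlam_eq j hj E 1 (by rw [hEv j hj, one_smul])
  have hlam_mul : ∀ j (hj : EW j ≠ ⊥) (x y : Matrix (Fin n) (Fin n) F), x ∈ eTe T E hE → y ∈ eTe T E hE →
      lam j (x * y) = lam j x * lam j y := by
    intro j hj x y hx hy
    refine hlam_eq j hj _ _ ?_
    rw [← mulVec_mulVec, hlam_spec j hj y hy, mulVec_smul, hlam_spec j hj x hx,
      smul_smul, mul_comm]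
  have hlam_add : ∀ j (hj : EW j ≠ ⊥) (x y : Matrix (Fin n) (Fin n) F), x ∈ eTe T E hE → y ∈ eTe T E hE →
      lam j (x + y) = lam j x + lam j y := by
    intro j hj x y hx hy
    refine hlam_eq j hj _ _ ?_
    rw [add_mulVec, hlam_spec j hj x hx, hlam_spec j hj y hy, add_smul]
  have hlam_sub : ∀ j (hj : EW j ≠ ⊥) (x y : Matrix (Fin n) (Fin n) F), x ∈ eTe T E hE → y ∈ eTe T E hE →
      lam j (x - y) = lam j x - lam j y := by
    intro j hj x y hx hy
    refine hlam_eq j hj _ _ ?_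
    rw [sub_mulVec, hlam_spec j hj x hx, hlam_spec j hj y hy, sub_smul]
  have hlam_smul : ∀ j (hj : EW j ≠ ⊥) (c : F) (x : Matrix (Fin n) (Fin n) F), x ∈ eTe T E hE →
      lam j (c • x) = c * lam j x := by
    intro j hj c x hx
    refine hlam_eq j hj _ _ ?_
    rw [smul_mulVec, hlam_spec j hj x hx, smul_smul]
  -- transfer along a T-isomorphism
  have hlam_iso : ∀ j j' (hj : EW j ≠ ⊥) (hj' : EW j' ≠ ⊥),
      TIso (T : Set (Matrix (Fin n) (Fin n) F)) (Ws j) (Ws j') → ∀ x ∈ eTe T E hE, lam j x = lam j' x := by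
    rintro j j' hj hj' ⟨σ, hbij, hcomm⟩ x hx
    set u := σ (v j) with hu
    have hvW : v j ∈ Ws j := hEWsub j _ (hv j hj).1
    have huEW : u ∈ EW j' := by
      obtain ⟨w, hw, hwv⟩ := (hv j hj).1
      refine ⟨σ w, hbij.mapsTo hw, ?_⟩
      have : σ (E *ᵥ w) = E *ᵥ σ w := hcomm E hE w hw
      rw [mulVecLin_apply] at hwv ⊢
      rw [← this, hwv]
    have hu0 : u ≠ 0 := by
      intro h0
      have h1 : σ (0 : Fin n → F) = 0 := map_zero σ
      have := hbij.injOn hvW (Submodule.zero_mem _) (by rw [← hu, h0, h1])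
      exact (hv j hj).2 this
    obtain ⟨B, hB, hxB⟩ := hx
    have hstep : ∀ w ∈ Ws j, σ ((E * B * E) *ᵥ w) = (E * B * E) *ᵥ σ w := by
      intro w hw
      have h1 : E *ᵥ w ∈ Ws j := hWinv j E hE w hw
      have h2 : B *ᵥ (E *ᵥ w) ∈ Ws j := hWinv j B hB _ h1
      calc σ ((E * B * E) *ᵥ w) = σ (E *ᵥ (B *ᵥ (E *ᵥ w))) := by
            rw [mulVec_mulVec, mulVec_mulVec]
        _ = E *ᵥ σ (B *ᵥ (E *ᵥ w)) := hcomm E hE _ h2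
        _ = E *ᵥ (B *ᵥ σ (E *ᵥ w)) := by rw [hcomm B hB _ h1]
        _ = E *ᵥ (B *ᵥ (E *ᵥ σ w)) := by rw [hcomm E hE w hw]
        _ = (E * B * E) *ᵥ σ w := by rw [mulVec_mulVec, mulVec_mulVec]
    have h3 : x *ᵥ u = lam j x • u := by
      rw [hu, hxB, ← hstep (v j) hvW, ← hxB, hlam_spec j hj x ⟨B, hB, hxB⟩]
      exact map_smul σ _ _
    obtain ⟨c, hc⟩ := hscal j' hj' u huEW
    have h4 : x *ᵥ u = lam j' x • u := by
      rw [hc, mulVec_smul, hlam_spec j' hj' x ⟨B, hB, hxB⟩, smul_smul, smul_smul, mul_comm]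
    have h5 : lam j x • u = lam j' x • u := by rw [← h3, h4]
    exact smul_left_injective F hu0 h5
  -- separation via the star structure
  have hker_gen : ∀ (a b : Fin m) (ha : EW a ≠ ⊥) (hb : EW b ≠ ⊥),
      (∀ x ∈ eTe T E hE, lam a x = lam b x) →
      ∀ B ∈ T, B *ᵥ v a = 0 → B *ᵥ v b = 0 := by
    intro a b ha hb hcon B hB h0
    set x : Matrix (Fin n) (Fin n) F := E * (Bᴴ * B) * E with hxdef
    have hx : x ∈ eTe T E hE := ⟨Bᴴ * B, mul_mem (hTc B hB) hB, rfl⟩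
    have hxv : x *ᵥ v a = 0 := by
      have e1 : x *ᵥ v a = E *ᵥ ((Bᴴ * B) *ᵥ (E *ᵥ v a)) := by
        rw [hxdef]; simp only [mulVec_mulVec, mul_assoc]
      rw [e1, hEv a ha, ← mulVec_mulVec, h0, mulVec_zero, mulVec_zero]
    have hl0 : lam a x = 0 := hlam_eq a ha x 0 (by rw [hxv, zero_smul])
    have hl0' : lam b x = 0 := by rw [← hcon x hx, hl0]
    have hxv' : x *ᵥ v b = 0 := by rw [hlam_spec b hb x hx, hl0', zero_smul]
    have hz : star (B *ᵥ v b) ⬝ᵥ (B *ᵥ v b) = 0 := by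
      have h1 : star (v b) ⬝ᵥ (x *ᵥ v b) = 0 := by rw [hxv', dotProduct_zero]
      have h2 : x *ᵥ v b = E *ᵥ (Bᴴ *ᵥ (B *ᵥ v b)) := by
        have e2 : x *ᵥ v b = E *ᵥ (Bᴴ *ᵥ (B *ᵥ (E *ᵥ v b))) := by
          rw [hxdef]; simp only [mulVec_mulVec, mul_assoc]
        rw [hEv b hb] at e2
        exact e2
      rw [h2, aux_adjoint E, hEs, hEv b hb, aux_adjoint Bᴴ, conjTranspose_conjTranspose] at h1
      exact h1
    exact aux_dot_self_zero hz
  have hsep : ∀ k k', k ≠ k' → ∃ x ∈ eTe T E hE,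
      lam (reps k) x ≠ lam (reps k') x := by
    intro k k' hkk'
    by_contra hcon
    push_neg at hcon
    apply hrepdist k k' hkk'
    set j := reps k with hjdef
    set j' := reps k' with hjdef'
    have hj : EW j ≠ ⊥ := hrep0 k
    have hj' : EW j' ≠ ⊥ := hrep0 k'
    have hcon' : ∀ x ∈ eTe T E hE, lam j x = lam j' x := hcon
    have hcon'' : ∀ x ∈ eTe T E hE, lam j' x = lam j x := fun x hx => (hcon x hx).symm
    have hker : ∀ B ∈ T, B *ᵥ v j = 0 → B *ᵥ v j' = 0 := hker_gen j j' hj hj' hcon'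
    have hker' : ∀ B ∈ T, B *ᵥ v j' = 0 → B *ᵥ v j = 0 := hker_gen j' j hj' hj hcon''
    have hwd : ∀ B C : Matrix (Fin n) (Fin n) F, B ∈ T → C ∈ T → B *ᵥ v j = C *ᵥ v j → B *ᵥ v j' = C *ᵥ v j' := by
      intro B C hB hC h
      have := hker (B - C) (sub_mem hB hC) (by rw [sub_mulVec, h, sub_self])
      rw [sub_mulVec] at this
      exact sub_eq_zero.mp this
    have hwd' : ∀ B C : Matrix (Fin n) (Fin n) F, B ∈ T → C ∈ T → B *ᵥ v j' = C *ᵥ v j' → B *ᵥ v j = C *ᵥ v j := by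
      intro B C hB hC h
      have := hker' (B - C) (sub_mem hB hC) (by rw [sub_mulVec, h, sub_self])
      rw [sub_mulVec] at this
      exact sub_eq_zero.mp this
    -- generation
    have hgen : ∀ (a : Fin m) (_ : EW a ≠ ⊥), ∀ w ∈ Ws a, ∃ B ∈ T, w = B *ᵥ v a := by
      intro a ha w hw
      let U : Submodule F (Fin n → F) :=
        { carrier := {w | ∃ B ∈ T, w = B *ᵥ v a}
          add_mem' := by
            rintro w1 w2 ⟨B, hB, rfl⟩ ⟨C, hC, rfl⟩
            exact ⟨B + C, add_mem hB hC, (add_mulVec _ _ _).symm⟩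
          zero_mem' := ⟨0, zero_mem _, (zero_mulVec _).symm⟩
          smul_mem' := by
            rintro c w1 ⟨B, hB, rfl⟩
            exact ⟨c • B, SMulMemClass.smul_mem c hB, (smul_mulVec _ _ _).symm⟩ }
      have hvWa : v a ∈ Ws a := hEWsub a _ (hv a ha).1
      have hUle : U ≤ Ws a := by
        rintro w1 ⟨B, hB, rfl⟩
        exact hWinv a B hB _ hvWa
      have hUinv : Invar (T : Set (Matrix (Fin n) (Fin n) F)) U := by
        rintro B hB w1 ⟨C, hC, rfl⟩
        exact ⟨B * C, mul_mem hB hC, mulVec_mulVec _ _ _⟩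
      have hU0 : U ≠ ⊥ := by
        rw [Submodule.ne_bot_iff]
        exact ⟨v a, ⟨1, one_mem T, (one_mulVec _).symm⟩, (hv a ha).2⟩
      have hUW : U = Ws a := ((hirr a).2.2 U hUle hUinv).resolve_left hU0
      rw [← hUW] at hw
      exact hw
    -- choose generators
    have hBex : ∀ w : Fin n → F, ∃ B : Matrix (Fin n) (Fin n) F, w ∈ Ws j → (B ∈ T ∧ w = B *ᵥ v j) := by
      intro w
      by_cases hw : w ∈ Ws j
      · obtain ⟨B, hB, hBw⟩ := hgen j hj w hw
        exact ⟨B, fun _ => ⟨hB, hBw⟩⟩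
      · exact ⟨0, fun h => absurd h hw⟩
    choose Bf hBf using hBex
    -- the linear map on Ws j
    let g : (Ws j) →ₗ[F] (Fin n → F) :=
      { toFun := fun w => Bf w.1 *ᵥ v j'
        map_add' := by
          rintro ⟨w1, hw1⟩ ⟨w2, hw2⟩
          have h1 := hBf w1 hw1
          have h2 := hBf w2 hw2
          have h12 := hBf (w1 + w2) (add_mem hw1 hw2)
          have : Bf (w1 + w2) *ᵥ v j = (Bf w1 + Bf w2) *ᵥ v j := by
            rw [add_mulVec, ← h1.2, ← h2.2, ← h12.2]
          have hfin := hwd _ _ h12.1 (add_mem h1.1 h2.1) this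
          show Bf (w1 + w2) *ᵥ v j' = Bf w1 *ᵥ v j' + Bf w2 *ᵥ v j'
          rw [hfin, add_mulVec]
        map_smul' := by
          rintro c ⟨w1, hw1⟩
          have h1 := hBf w1 hw1
          have hc := hBf (c • w1) (SMulMemClass.smul_mem c hw1)
          have : Bf (c • w1) *ᵥ v j = (c • Bf w1) *ᵥ v j := by
            rw [smul_mulVec, ← h1.2, ← hc.2]
          have hfin := hwd _ _ hc.1 (SMulMemClass.smul_mem c h1.1) this
          show Bf (c • w1) *ᵥ v j' = c • (Bf w1 *ᵥ v j')
          rw [hfin, smul_mulVec] }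
    obtain ⟨U', hcompl⟩ := Submodule.exists_isCompl (Ws j)
    let σ : (Fin n → F) →ₗ[F] (Fin n → F) :=
      g.comp ((Ws j).linearProjOfIsCompl U' hcompl)
    have hσ : ∀ w (hw : w ∈ Ws j), σ w = Bf w *ᵥ v j' := by
      intro w hw
      have : ((Ws j).linearProjOfIsCompl U' hcompl) w = ⟨w, hw⟩ :=
        Submodule.linearProjOfIsCompl_apply_left hcompl ⟨w, hw⟩
      simp only [σ, LinearMap.comp_apply, this]
      rfl
    have hvW' : v j' ∈ Ws j' := hEWsub j' _ (hv j' hj').1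
    refine ⟨σ, ⟨?_, ?_, ?_⟩, ?_⟩
    · -- mapsTo
      intro w hw
      rw [hσ w hw]
      exact hWinv j' (Bf w) (hBf w hw).1 _ hvW'
    · -- injOn
      intro w1 hw1 w2 hw2 hσeq
      rw [hσ w1 hw1, hσ w2 hw2] at hσeq
      have := hwd' _ _ (hBf w1 hw1).1 (hBf w2 hw2).1 hσeq
      rw [← (hBf w1 hw1).2, ← (hBf w2 hw2).2] at this
      exact this
    · -- surjOn
      intro w' hw'
      obtain ⟨B, hB, hBw'⟩ := hgen j' hj' w' hw'
      have hBvW : B *ᵥ v j ∈ Ws j := hWinv j B hB _ (hEWsub j _ (hv j hj).1)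
      refine ⟨B *ᵥ v j, hBvW, ?_⟩
      rw [hσ _ hBvW]
      have := hwd _ _ (hBf _ hBvW).1 hB (hBf _ hBvW).2.symm
      rw [this, hBw']
    · -- commutation
      intro B hB w hw
      have hBw : B *ᵥ w ∈ Ws j := hWinv j B hB w hw
      rw [hσ _ hBw, hσ _ hw]
      have h1 : Bf (B *ᵥ w) *ᵥ v j = (B * Bf w) *ᵥ v j := by
        rw [← mulVec_mulVec, ← (hBf w hw).2, ← (hBf _ hBw).2]
      have := hwd _ _ (hBf _ hBw).1 (mul_mem hB (hBf w hw).1) h1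
      rw [this, ← mulVec_mulVec]
  -- injectivity
  have hinj0 : ∀ x ∈ eTe T E hE, (∀ k, lam (reps k) x = 0) → x = 0 := by
    intro x hx h0
    have hkerj : ∀ j, ∀ w ∈ Ws j, x *ᵥ w = 0 := by
      intro j w hw
      obtain ⟨B, hB, hxB⟩ := hx
      have hxw : x *ᵥ w = x *ᵥ (E *ᵥ w) := by
        rw [hxB, mulVec_mulVec]
        congr 1
        rw [mul_assoc (E * B) E E, hEi]
      by_cases hj : EW j = ⊥
      · have hmem : E.mulVecLin w ∈ EW j := Submodule.mem_map_of_mem hw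
        rw [hj, Submodule.mem_bot] at hmem
        rw [mulVecLin_apply] at hmem
        rw [hxw, hmem, mulVec_zero]
      · obtain ⟨k, hiso⟩ := hrepfull j hj
        have hlj : lam j x = lam (reps k) x :=
          hlam_iso j (reps k) hj (hrep0 k) hiso x ⟨B, hB, hxB⟩
        have hEw : E *ᵥ w ∈ EW j := ⟨w, hw, (mulVecLin_apply E w)⟩
        obtain ⟨c, hc⟩ := hscal j hj _ hEw
        rw [hxw, hc, mulVec_smul, hlam_spec j hj x ⟨B, hB, hxB⟩, hlj, h0 k, zero_smul,
          smul_zero]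
    have hall : ∀ w, x *ᵥ w = 0 := by
      have hle : (⨆ j, Ws j) ≤ LinearMap.ker x.mulVecLin := by
        refine iSup_le fun j => fun w hw => ?_
        rw [LinearMap.mem_ker, mulVecLin_apply]
        exact hkerj j w hw
      intro w
      have hw : w ∈ LinearMap.ker x.mulVecLin := hle (hsup ▸ Submodule.mem_top)
      rw [LinearMap.mem_ker, mulVecLin_apply] at hw
      exact hw
    ext i jj
    have := congrFun (hall (Pi.single jj 1)) i
    rw [mulVec_single] at this
    simpa using this
  -- Lagrange interpolation: basis elements in the image
  have hbasis : ∀ k, ∃ x ∈ eTe T E hE,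
      ∀ k', lam (reps k') x = if k' = k then 1 else 0 := by
    intro k
    have hy : ∀ k', k' ≠ k → ∃ y ∈ eTe T E hE,
        lam (reps k) y = 1 ∧ lam (reps k') y = 0 := by
      intro k' hk'
      obtain ⟨x, hx, hne⟩ := hsep k k' (Ne.symm hk')
      have hd : lam (reps k) x - lam (reps k') x ≠ 0 := sub_ne_zero_of_ne hne
      set c := lam (reps k') x with hcdef
      set d := lam (reps k) x - lam (reps k') x with hddef
      have hxE : x - c • E ∈ eTe T E hE := sub_mem hx (SMulMemClass.smul_mem c hE_mem)
      refine ⟨d⁻¹ • (x - c • E), SMulMemClass.smul_mem _ hxE, ?_, ?_⟩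
      · rw [hlam_smul _ (hrep0 k) _ _ hxE, hlam_sub _ (hrep0 k) _ _ hx
          (SMulMemClass.smul_mem c hE_mem), hlam_smul _ (hrep0 k) _ _ hE_mem,
          hlam_E _ (hrep0 k), mul_one]
        exact inv_mul_cancel₀ hd
      · rw [hlam_smul _ (hrep0 k') _ _ hxE, hlam_sub _ (hrep0 k') _ _ hx
          (SMulMemClass.smul_mem c hE_mem), hlam_smul _ (hrep0 k') _ _ hE_mem,
          hlam_E _ (hrep0 k'), mul_one, sub_self, mul_zero]
    have main : ∀ s : Finset (Fin ℓ), k ∉ s → ∃ x ∈ eTe T E hE,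
        lam (reps k) x = 1 ∧ ∀ k' ∈ s, lam (reps k') x = 0 := by
      intro s
      induction s using Finset.induction_on with
      | empty =>
        exact fun _ => ⟨E, hE_mem, hlam_E _ (hrep0 k), fun k' h => absurd h (by simp)⟩
      | @insert a s ha ih =>
        intro hks
        have hka : a ≠ k := fun h => hks (by rw [h]; exact Finset.mem_insert_self k s)
        have hks' : k ∉ s := fun h => hks (Finset.mem_insert_of_mem h)
        obtain ⟨x, hx, hx1, hx0⟩ := ih hks'
        obtain ⟨y, hy', hy1, hy0⟩ := hy a hka
        refine ⟨x * y, mul_mem hx hy', ?_, ?_⟩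
        · rw [hlam_mul _ (hrep0 k) _ _ hx hy', hx1, hy1, mul_one]
        · intro k' hk'
          rcases Finset.mem_insert.mp hk' with h | h
          · rw [h, hlam_mul _ (hrep0 a) _ _ hx hy', hy0, mul_zero]
          · rw [hlam_mul _ (hrep0 k') _ _ hx hy', hx0 k' h, zero_mul]
    obtain ⟨x, hx, hx1, hx0⟩ := main (Finset.univ.erase k) (Finset.notMem_erase k _)
    refine ⟨x, hx, fun k' => ?_⟩
    by_cases h : k' = k
    · rw [if_pos h, h, hx1]
    · rw [if_neg h]
      exact hx0 k' (Finset.mem_erase.mpr ⟨h, Finset.mem_univ k'⟩)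
  -- sums
  have hlam_sum : ∀ (jj : Fin m) (hj : EW jj ≠ ⊥) (a : Fin ℓ → F) (xb : Fin ℓ → Matrix (Fin n) (Fin n) F)
      (hxb : ∀ k, xb k ∈ eTe T E hE) (s : Finset (Fin ℓ)),
      lam jj (∑ k ∈ s, a k • xb k) = ∑ k ∈ s, a k * lam jj (xb k) := by
    intro jj hj a xb hxb s
    induction s using Finset.induction_on with
    | empty =>
      simp only [Finset.sum_empty]
      exact hlam_eq jj hj 0 0 (by rw [zero_mulVec, zero_smul])
    | @insert b s hb ih =>
      rw [Finset.sum_insert hb, Finset.sum_insert hb,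
        hlam_add jj hj _ _ (SMulMemClass.smul_mem _ (hxb b))
          (sum_mem fun k _ => SMulMemClass.smul_mem _ (hxb k)),
        hlam_smul jj hj _ _ (hxb b), ih]
  choose xb hxb hxbl using hbasis
  -- the equivalence
  let φf : (eTe T E hE) → (Fin ℓ → F) := fun x k => lam (reps k) x.1
  have hφinj : Function.Injective φf := by
    intro x y h
    have hsub : (x : Matrix (Fin n) (Fin n) F) - y ∈ eTe T E hE := sub_mem x.2 y.2
    have h0 : ∀ k, lam (reps k) ((x : Matrix (Fin n) (Fin n) F) - (y : Matrix (Fin n) (Fin n) F)) = 0 := by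
      intro k
      rw [hlam_sub _ (hrep0 k) _ _ x.2 y.2]
      have := congrFun h k
      simp only [φf] at this
      rw [this, sub_self]
    have := hinj0 _ hsub h0
    exact Subtype.ext (sub_eq_zero.mp this)
  have hφsurj : Function.Surjective φf := by
    intro a
    refine ⟨⟨∑ k, a k • xb k, sum_mem fun k _ => SMulMemClass.smul_mem _ (hxb k)⟩,
      ?_⟩
    funext k
    show lam (reps k) (∑ k', a k' • xb k') = a k
    rw [hlam_sum (reps k) (hrep0 k) a xb hxb]
    rw [Finset.sum_eq_single k]
    · rw [hxbl k k, if_pos rfl, mul_one]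
    · intro k' _ hk'
      rw [hxbl k' k, if_neg (Ne.symm hk'), mul_zero]
    · intro h; exact absurd (Finset.mem_univ k) h
  let e : (eTe T E hE) ≃ (Fin ℓ → F) := Equiv.ofBijective φf ⟨hφinj, hφsurj⟩
  refine ⟨{ toEquiv := e,
            map_mul' := ?_,
            map_add' := ?_ }, ?_⟩
  · intro x y
    funext k
    show lam (reps k) ((x * y : eTe T E hE) : Matrix (Fin n) (Fin n) F) = lam (reps k) x.1 * lam (reps k) y.1
    rw [show ((x * y : eTe T E hE) : Matrix (Fin n) (Fin n) F) = (x : Matrix (Fin n) (Fin n) F) * y from rfl]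
    exact hlam_mul _ (hrep0 k) _ _ x.2 y.2
  · intro x y
    funext k
    show lam (reps k) ((x + y : eTe T E hE) : Matrix (Fin n) (Fin n) F) = lam (reps k) x.1 + lam (reps k) y.1
    rw [show ((x + y : eTe T E hE) : Matrix (Fin n) (Fin n) F) = (x : Matrix (Fin n) (Fin n) F) + y from rfl]
    exact hlam_add _ (hrep0 k) _ _ x.2 y.2
  · intro c x
    funext k
    show lam (reps k) ((c • x : eTe T E hE) : Matrix (Fin n) (Fin n) F) = c • lam (reps k) x.1
    rw [show ((c • x : eTe T E hE) : Matrix (Fin n) (Fin n) F) = c • (x : Matrix (Fin n) (Fin n) F) from rfl]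
    rw [hlam_smul _ (hrep0 k) _ _ x.2]
    rfl
end

section
/- Let F = ℝ or ℂ, let T ⊆ Mat_n(F) be a unital subalgebra closed under conjugate-transpose, W an irreducible T-submodule of Fⁿ, E ∈ T a self-adjoint idempotent with EW one-dimensional, and 0 ≠ w ∈ EW. If for all B ∈ T the matrix E B̄ᵀ B E restricted to W acts on w as a scalar p_B(w) ∈ F, then for any other irreducible T-module W' with 0 ≠ w' ∈ EW' on which each E B̄ᵀ B E acts by the same scalar p_B, the map Bw ↦ Bw' (B ∈ T) is a well-defined T-module isomorphism from W to W'. -/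
open Matrix

section aux
variable {n : ℕ} {F : Type*} [RCLike F]

/-- `B ↦ B *ᵥ w` as a linear map in `B`. -/
def mulVecAt (w : Fin n → F) : Matrix (Fin n) (Fin n) F →ₗ[F] (Fin n → F) where
  toFun B := B.mulVec w
  map_add' B C := Matrix.add_mulVec B C w
  map_smul' c B := Matrix.smul_mulVec c B w

@[simp] lemma mulVecAt_apply (w : Fin n → F) (B : Matrix (Fin n) (Fin n) F) :
    mulVecAt w B = B.mulVec w := rfl

lemma stardot_eq_zero (v : Fin n → F) : star v ⬝ᵥ v = 0 ↔ v = 0 := by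
  have h : star v ⬝ᵥ v = ((∑ i, ‖v i‖ ^ 2 : ℝ) : F) := by
    simp only [dotProduct, Pi.star_apply, RCLike.star_def, RCLike.conj_mul]
    push_cast
    rfl
  rw [h]
  rw [show ((0 : F) = ((0 : ℝ) : F)) by simp, RCLike.ofReal_inj]
  constructor
  · intro h0
    funext i
    have := (Finset.sum_eq_zero_iff_of_nonneg (fun i _ => sq_nonneg ‖v i‖)).mp h0 i
      (Finset.mem_univ i)
    have : ‖v i‖ = 0 := by
      have := sq_eq_zero_iff.mp this
      exact this
    simpa using this
  · intro h0
    subst h0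
    simp

lemma norm_formula (E B : Matrix (Fin n) (Fin n) F) (hEs : Eᴴ = E)
    (w : Fin n → F) (hEw : E.mulVec w = w) :
    star (B.mulVec w) ⬝ᵥ B.mulVec w = star w ⬝ᵥ (E * Bᴴ * B * E).mulVec w := by
  have hsw : star w ᵥ* E = star w := by
    rw [← hEs, ← Matrix.star_mulVec, hEw]
  calc star (B.mulVec w) ⬝ᵥ B.mulVec w
      = (star w ᵥ* Bᴴ) ⬝ᵥ ((B * E).mulVec w) := by
        rw [Matrix.star_mulVec, ← Matrix.mulVec_mulVec, hEw]
    _ = ((star w ᵥ* Bᴴ) ᵥ* (B * E)) ⬝ᵥ w := Matrix.dotProduct_mulVec _ _ _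
    _ = (star w ᵥ* (E * Bᴴ * B * E)) ⬝ᵥ w := by
        rw [Matrix.vecMul_vecMul,
          show E * Bᴴ * B * E = E * (Bᴴ * (B * E)) by rw [Matrix.mul_assoc, Matrix.mul_assoc]]
        conv_rhs => rw [← Matrix.vecMul_vecMul, hsw]
    _ = star w ⬝ᵥ (E * Bᴴ * B * E).mulVec w := (Matrix.dotProduct_mulVec _ _ _).symm

end aux

/-- Let `F = ℝ` or `ℂ`, `T ⊆ Mat_n(F)` a unital subalgebra closed under
conjugate-transpose, `W` an irreducible `T`-module, `E ∈ T` a self-adjoint idempotent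
with `EW` one-dimensional, `0 ≠ w ∈ EW`, and suppose each `E Bᴴ B E` acts on `w` as
the scalar `p B`. Then for any irreducible `T`-module `W'` with `0 ≠ w' ∈ EW'` on
which each `E Bᴴ B E` acts by the same scalars `p B`, the map `Bw ↦ Bw'` is a
well-defined `T`-module isomorphism from `W` onto `W'`. -/
theorem stmt_17 {n : ℕ} {F : Type*} [RCLike F]
    (T : Subalgebra F (Matrix (Fin n) (Fin n) F))
    (hTc : ∀ B ∈ T, Bᴴ ∈ T)
    (E : Matrix (Fin n) (Fin n) F) (hE : E ∈ T) (hEi : E * E = E) (hEs : Eᴴ = E)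
    (W W' : Submodule F (Fin n → F))
    (hW : IsIrred (T : Set (Matrix (Fin n) (Fin n) F)) W)
    (hW' : IsIrred (T : Set (Matrix (Fin n) (Fin n) F)) W')
    (hd : Module.finrank F (Submodule.map E.mulVecLin W) = 1)
    (w w' : Fin n → F)
    (hw : w ∈ Submodule.map E.mulVecLin W) (hw0 : w ≠ 0)
    (hw' : w' ∈ Submodule.map E.mulVecLin W') (hw0' : w' ≠ 0)
    (p : Matrix (Fin n) (Fin n) F → F)
    (hp : ∀ B ∈ T, (E * Bᴴ * B * E).mulVec w = p B • w)
    (hp' : ∀ B ∈ T, (E * Bᴴ * B * E).mulVec w' = p B • w') :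
    ∃ σ : (Fin n → F) →ₗ[F] (Fin n → F),
      (∀ B ∈ T, σ (B.mulVec w) = B.mulVec w') ∧
      Set.BijOn σ (W : Set (Fin n → F)) (W' : Set (Fin n → F)) ∧
      (∀ B ∈ T, ∀ v ∈ W, σ (B.mulVec v) = B.mulVec (σ v)) := by
  classical
  -- basic facts about w, w'
  obtain ⟨v, hvW, rfl⟩ := hw
  obtain ⟨v', hvW', rfl⟩ := hw'
  set w : Fin n → F := E.mulVecLin v with hwdef
  set w' : Fin n → F := E.mulVecLin v' with hwdef'
  have hEw : E.mulVec w = w := by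
    show E.mulVec (E.mulVec v) = E.mulVec v
    rw [Matrix.mulVec_mulVec, hEi]
  have hEw' : E.mulVec w' = w' := by
    show E.mulVec (E.mulVec v') = E.mulVec v'
    rw [Matrix.mulVec_mulVec, hEi]
  have hwW : w ∈ W := hW.2.1 E hE v hvW
  have hwW' : w' ∈ W' := hW'.2.1 E hE v' hvW'
  -- the two evaluation maps on the subalgebra
  set S : Submodule F (Matrix (Fin n) (Fin n) F) := Subalgebra.toSubmodule T with hS
  set f : S →ₗ[F] (Fin n → F) := (mulVecAt w).comp S.subtype with hf
  set f' : S →ₗ[F] (Fin n → F) := (mulVecAt w').comp S.subtype with hf'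
  have hfapp : ∀ b : S, f b = (b : Matrix (Fin n) (Fin n) F).mulVec w := fun b => rfl
  have hfapp' : ∀ b : S, f' b = (b : Matrix (Fin n) (Fin n) F).mulVec w' := fun b => rfl
  -- kernels coincide
  have hc : star w ⬝ᵥ w ≠ 0 := fun h => hw0 ((stardot_eq_zero _).mp h)
  have hc' : star w' ⬝ᵥ w' ≠ 0 := fun h => hw0' ((stardot_eq_zero _).mp h)
  have key : ∀ b : S, f b = 0 ↔ f' b = 0 := by
    intro b
    have hbT : (b : Matrix (Fin n) (Fin n) F) ∈ T := b.2
    have h1 : star (f b) ⬝ᵥ f b = p b * (star w ⬝ᵥ w) := by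
      rw [hfapp, norm_formula E b hEs w hEw, hp b hbT, dotProduct_smul, smul_eq_mul]
    have h1' : star (f' b) ⬝ᵥ f' b = p b * (star w' ⬝ᵥ w') := by
      rw [hfapp', norm_formula E b hEs w' hEw', hp' b hbT, dotProduct_smul, smul_eq_mul]
    constructor
    · intro h
      have : p b = 0 := by
        have := h1; rw [h] at this; simp at this
        rcases this with h | h
        · exact h
        · exact absurd h hc
      apply (stardot_eq_zero _).mp
      rw [h1', this, zero_mul]
    · intro h
      have : p b = 0 := by
        have := h1'; rw [h] at this; simp at this
        rcases this with h | h
        · exact h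
        · exact absurd h hc'
      apply (stardot_eq_zero _).mp
      rw [h1, this, zero_mul]
  have hker : LinearMap.ker f = LinearMap.ker f' := by
    ext b; simp only [LinearMap.mem_ker]; exact key b
  -- ranges are W and W'
  have hrange : ∀ (w₀ : Fin n → F) (W₀ : Submodule F (Fin n → F)),
      IsIrred (T : Set (Matrix (Fin n) (Fin n) F)) W₀ → w₀ ∈ W₀ → w₀ ≠ 0 →
      LinearMap.range ((mulVecAt w₀).comp S.subtype) = W₀ := by
    intro w₀ W₀ hIr hmem h0
    set g : S →ₗ[F] (Fin n → F) := (mulVecAt w₀).comp S.subtype with hg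
    have hle : LinearMap.range g ≤ W₀ := by
      rintro x ⟨b, rfl⟩
      exact hIr.2.1 b b.2 w₀ hmem
    have hinv : Invar (T : Set (Matrix (Fin n) (Fin n) F)) (LinearMap.range g) := by
      rintro B hB x ⟨c, rfl⟩
      have hc2 : (c : Matrix (Fin n) (Fin n) F) ∈ T := c.2
      refine ⟨⟨B * c, (Subalgebra.mem_toSubmodule T).mpr (mul_mem hB hc2)⟩, ?_⟩
      show (B * (c : Matrix (Fin n) (Fin n) F)).mulVec w₀ = _
      rw [← Matrix.mulVec_mulVec]; rfl
    rcases hIr.2.2 _ hle hinv with h | h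
    · exfalso
      have : w₀ ∈ LinearMap.range g := ⟨⟨1, one_mem T⟩, by
        show (1 : Matrix (Fin n) (Fin n) F).mulVec w₀ = w₀; exact Matrix.one_mulVec w₀⟩
      rw [h] at this
      exact h0 (by simpa using this)
    · exact h
  have hRW : LinearMap.range f = W := hrange w W hW hwW hw0
  have hRW' : LinearMap.range f' = W' := hrange w' W' hW' hwW' hw0'
  -- build sigma
  have hker' : LinearMap.ker f ≤ LinearMap.ker f' := le_of_eq hker
  set q : S ⧸ LinearMap.ker f →ₗ[F] (Fin n → F) := Submodule.liftQ _ f' hker' with hq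
  set e : (S ⧸ LinearMap.ker f) ≃ₗ[F] LinearMap.range f := f.quotKerEquivRange with he
  set σ₀ : LinearMap.range f →ₗ[F] (Fin n → F) := q.comp (e.symm : _ →ₗ[F] _) with hσ₀
  obtain ⟨C, hC⟩ := Submodule.exists_isCompl (LinearMap.range f)
  set π : (Fin n → F) →ₗ[F] LinearMap.range f :=
    (LinearMap.range f).linearProjOfIsCompl C hC with hπ
  set σ : (Fin n → F) →ₗ[F] (Fin n → F) := σ₀.comp π with hσdef
  have hσval : ∀ b : S, σ (f b) = f' b := by
    intro b
    have hmem : f b ∈ LinearMap.range f := ⟨b, rfl⟩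
    have hπ1 : π (f b) = ⟨f b, hmem⟩ :=
      Submodule.linearProjOfIsCompl_apply_left hC ⟨f b, hmem⟩
    have he1 : e.symm ⟨f b, hmem⟩ = (LinearMap.ker f).mkQ b :=
      f.quotKerEquivRange_symm_apply_image b hmem
    show σ₀ (π (f b)) = f' b
    rw [hπ1]
    show q (e.symm ⟨f b, hmem⟩) = f' b
    rw [he1]
    exact Submodule.liftQ_apply _ f' b
  have hmemW : ∀ x ∈ W, ∃ b : S, f b = x := by
    intro x hx
    rw [← hRW] at hx
    exact hx
  refine ⟨σ, ?_, ?_, ?_⟩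
  · intro B hB
    exact hσval ⟨B, hB⟩
  · refine ⟨?_, ?_, ?_⟩
    · intro x hx
      obtain ⟨b, rfl⟩ := hmemW x hx
      rw [hσval b, ← hRW']
      exact ⟨b, rfl⟩
    · intro x hx y hy hxy
      obtain ⟨b, rfl⟩ := hmemW x hx
      obtain ⟨c, rfl⟩ := hmemW y hy
      rw [hσval, hσval] at hxy
      have : f' (b - c) = 0 := by rw [map_sub, hxy, sub_self]
      have : f (b - c) = 0 := (key (b - c)).mpr this
      rw [map_sub, sub_eq_zero] at this
      exact this
    · intro y hy
      rw [← hRW'] at hy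
      obtain ⟨b, rfl⟩ := hy
      refine ⟨f b, ?_, hσval b⟩
      rw [← hRW]
      exact ⟨b, rfl⟩
  · intro B hB v hv
    obtain ⟨c, rfl⟩ := hmemW v hv
    have hc2 : (c : Matrix (Fin n) (Fin n) F) ∈ T := c.2
    have hBf : B.mulVec (f c) = f ⟨B * (c : Matrix (Fin n) (Fin n) F), (Subalgebra.mem_toSubmodule T).mpr (mul_mem hB hc2)⟩ := by
      show _ = (B * (c : Matrix (Fin n) (Fin n) F)).mulVec w
      rw [← Matrix.mulVec_mulVec]; rfl
    rw [hBf, hσval, hσval]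
    show (B * (c : Matrix (Fin n) (Fin n) F)).mulVec w' = _
    rw [← Matrix.mulVec_mulVec]; rfl
end
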